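/- For all integers i ≥ 1 and h ≥ 1, (1/2^i)·H_i + (1 − 1/2^i)·∑_{q=0}^{h} H_{i+q+1}/2^{min(q+1,h)} ≤ δ_i. -/
import Mathlib


/-- The `n`-th harmonic number `H_n = ∑_{j=1}^n 1/j` (with `H 0 = 0`). -/
noncomputable def H (n : ℕ) : ℝ := ∑ j ∈ Finset.Icc 1 n, (1 : ℝ) / (j : ℝ)

/-- `δ_i = (1/2^i)·H_i + (1 − 1/2^i)·∑_{q=1}^∞ H_{q+i}/2^q`. -/
noncomputable def δ (i : ℕ) : ℝ :=
  (1 / 2 ^ i) * H i + (1 - 1 / 2 ^ i) * ∑' q : ℕ, H (q + 1 + i) / 2 ^ (q + 1)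

lemma H_nonneg (n : ℕ) : 0 ≤ H n := by
  unfold H; positivity

lemma H_mono : Monotone H := by
  intro m n hmn
  unfold H
  apply Finset.sum_le_sum_of_subset_of_nonneg
  · exact Finset.Icc_subset_Icc_right hmn
  · intro j _ _; positivity

lemma H_le (n : ℕ) : H n ≤ n := by
  unfold H
  calc ∑ j ∈ Finset.Icc 1 n, (1 : ℝ) / (j : ℝ)
      ≤ ∑ j ∈ Finset.Icc 1 n, (1 : ℝ) := by
        apply Finset.sum_le_sum
        intro j hj
        rw [Finset.mem_Icc] at hj
        rw [div_le_one (by exact_mod_cast hj.1)]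
        exact_mod_cast hj.1
    _ = n := by simp

lemma f_summable (i : ℕ) : Summable (fun q : ℕ => H (q + 1 + i) / 2 ^ (q + 1)) := by
  have h1 : Summable (fun q : ℕ => (q : ℝ) * (1/2) ^ q) := by
    simpa using summable_pow_mul_geometric_of_norm_lt_one (R := ℝ) 1
      (r := 1/2) (by norm_num)
  have h2 : Summable (fun q : ℕ => ((1 : ℝ) + i) * (1/2) ^ q) :=
    (summable_geometric_of_lt_one (by norm_num) (by norm_num)).mul_left _
  have hg : Summable (fun q : ℕ => ((q : ℝ) + 1 + i) * (1/2) ^ (q + 1)) :=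
    ((h1.add h2).mul_left (1/2)).congr (fun b => by push_cast; ring)
  apply Summable.of_nonneg_of_le
    (fun q => div_nonneg (H_nonneg _) (by positivity)) _ hg
  intro q
  have h1' : H (q + 1 + i) ≤ ((q : ℝ) + 1 + i) := by
    have := H_le (q + 1 + i)
    push_cast at this
    linarith
  rw [div_pow, one_pow, mul_one_div]
  gcongr

/-- For all integers `i ≥ 1` and `h ≥ 1`,
`(1/2^i)·H_i + (1 − 1/2^i)·∑_{q=0}^{h} H_{i+q+1}/2^{min(q+1,h)} ≤ δ_i`. -/
theorem stmt_18 (i h : ℕ) (hi : 1 ≤ i) (hh : 1 ≤ h) :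
    (1 / 2 ^ i) * H i
        + (1 - 1 / 2 ^ i) * ∑ q ∈ Finset.range (h + 1), H (i + q + 1) / 2 ^ min (q + 1) h
      ≤ δ i := by
  set f : ℕ → ℝ := fun q => H (q + 1 + i) / 2 ^ (q + 1) with hf
  have hsum := f_summable i
  have hB : (0:ℝ) ≤ 1 - 1 / 2 ^ i := by
    have h2 : (1:ℝ) ≤ 2 ^ i := by exact_mod_cast Nat.one_le_two_pow
    have : (1:ℝ) / 2 ^ i ≤ 1 := by
      rw [div_le_one (by positivity)]; exact h2
    linarith
  unfold δ
  gcongr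
  -- rewrite the finite sum
  have hsplit : ∑ q ∈ Finset.range (h + 1), H (i + q + 1) / 2 ^ min (q + 1) h
      = ∑ q ∈ Finset.range (h + 1), f q + H (i + h + 1) / 2 ^ (h + 1) := by
    rw [Finset.sum_range_succ, Finset.sum_range_succ]
    have h1 : ∀ q ∈ Finset.range h, H (i + q + 1) / 2 ^ min (q + 1) h = f q := by
      intro q hq
      rw [Finset.mem_range] at hq
      rw [min_eq_left (by omega)]
      simp [hf, show i + q + 1 = q + 1 + i by omega]
    rw [Finset.sum_congr rfl h1]
    have h2 : min (h + 1) h = h := min_eq_right (by omega)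
    rw [h2]
    have h3 : f h = H (i + h + 1) / 2 ^ (h + 1) := by
      simp [hf, show h + 1 + i = i + h + 1 by omega]
    rw [h3]
    have : H (i + h + 1) / 2 ^ h = H (i + h + 1) / 2 ^ (h + 1) + H (i + h + 1) / 2 ^ (h + 1) := by
      rw [pow_succ]; ring
    rw [this]; ring
  rw [hsplit]
  have hsum_shift : Summable (fun k : ℕ => f (k + (h + 1))) :=
    (summable_nat_add_iff (h + 1)).2 hsum
  have hsum_min : Summable (fun k : ℕ => H (i + h + 1) / 2 ^ (k + h + 2)) := by
    have := (summable_geometric_of_lt_one (show (0:ℝ) ≤ 1/2 by norm_num)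
      (by norm_num)).mul_left (H (i + h + 1) / 2 ^ (h + 2))
    apply this.congr
    intro b
    rw [show b + h + 2 = (h + 2) + b by omega, pow_add, div_pow, one_pow,
      div_mul_div_comm, mul_one]
    ring
  have key : H (i + h + 1) / 2 ^ (h + 1) = ∑' k : ℕ, H (i + h + 1) / 2 ^ (k + h + 2) := by
    have heq : ∀ k : ℕ, H (i + h + 1) / 2 ^ (k + h + 2)
        = (H (i + h + 1) / 2 ^ (h + 2)) * (1/2) ^ k := by
      intro k
      rw [show k + h + 2 = (h + 2) + k by omega, pow_add, div_pow, one_pow]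
      field_simp
    rw [tsum_congr heq, tsum_mul_left,
      tsum_geometric_of_lt_one (by norm_num) (by norm_num)]
    have h2 : (0:ℝ) < 2 ^ (h + 1) := by positivity
    rw [show h + 2 = (h + 1) + 1 from rfl, pow_succ]
    field_simp
    ring
  have htail : H (i + h + 1) / 2 ^ (h + 1) ≤ ∑' k : ℕ, f (k + (h + 1)) := by
    rw [key]
    apply Summable.tsum_le_tsum _ hsum_min hsum_shift
    intro k
    simp only [hf]
    rw [show k + (h + 1) + 1 = k + h + 2 by omega]
    gcongr
    exact H_mono (by omega)
  calc ∑ q ∈ Finset.range (h + 1), f q + H (i + h + 1) / 2 ^ (h + 1)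
      ≤ ∑ q ∈ Finset.range (h + 1), f q + ∑' k : ℕ, f (k + (h + 1)) := by linarith
    _ = ∑' q : ℕ, f q := Summable.sum_add_tsum_nat_add (h + 1) hsum
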